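/- arXiv:2604.22630 — 2 statements merged into one kernel-verified Lean document; each statement's English description precedes it below -/
import Mathlib

section
/- (Supersaturation) For every k-uniform hypergraph F and every ε > 0, there exist δ > 0 and n₀ such that every k-graph on n ≥ n₀ vertices with at least (π(F) + ε)·C(n,k) edges contains at least δ·n^{v(F)} copies of F, where v(F) is the number of vertices of F. -/
open Finset Set Filter

/-- Adding the `k`-set `e` to the hypergraph with edge set `H` creates a new copy of the
hypergraph with edge set `Fe`, i.e. a copy containing `e` as an edge. -/
def CreatesCopy {ι V : Type*} (Fe : Set (Finset ι)) (H : Set (Finset V)) (e : Finset V) : Prop :=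
  ∃ f : ι ↪ V, (∀ s ∈ Fe, s.map f ∈ H ∪ {e}) ∧ ∃ s ∈ Fe, s.map f = e

/-- One step of the `F`-bootstrap percolation process for `k`-graphs. -/
def bootStep {ι V : Type*} (k : ℕ) (Fe : Set (Finset ι)) (H : Set (Finset V)) :
    Set (Finset V) :=
  H ∪ {e | e.card = k ∧ CreatesCopy Fe H e}

/-- The `F`-bootstrap percolation process starting with `H0`. -/
def procSeq {ι V : Type*} (k : ℕ) (Fe : Set (Finset ι)) (H0 : Set (Finset V)) :
    ℕ → Set (Finset V)
  | 0 => H0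
  | i + 1 => bootStep k Fe (procSeq k Fe H0 i)

/-- The running time of the `F`-bootstrap percolation process starting with `H0`. -/
noncomputable def runTime {ι V : Type*} (k : ℕ) (Fe : Set (Finset ι))
    (H0 : Set (Finset V)) : ℕ :=
  sInf {i | procSeq k Fe H0 i = procSeq k Fe H0 (i + 1)}

/-- The maximum running time over all `k`-uniform starting hypergraphs on `n` vertices. -/
noncomputable def maxRunTime {ι : Type*} (k : ℕ) (Fe : Set (Finset ι)) (n : ℕ) : ℕ :=
  sSup {t | ∃ H0 : Set (Finset (Fin n)), (∀ e ∈ H0, e.card = k) ∧ t = runTime k Fe H0}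

/-- `H` contains a copy of the hypergraph with edge set `Fe`. -/
def ContainsCopy {ι V : Type*} (Fe : Set (Finset ι)) (H : Set (Finset V)) : Prop :=
  ∃ f : ι ↪ V, ∀ s ∈ Fe, s.map f ∈ H

/-- The Turán extremal number `ex(n, F)` for `k`-graphs. -/
noncomputable def exNum {ι : Type*} (k : ℕ) (Fe : Set (Finset ι)) (n : ℕ) : ℕ :=
  sSup {m | ∃ H : Set (Finset (Fin n)),
    (∀ e ∈ H, e.card = k) ∧ ¬ ContainsCopy Fe H ∧ m = H.ncard}

/-- The Turán density `π(F)`. -/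
noncomputable def turanDensity {ι : Type*} (k : ℕ) (Fe : Set (Finset ι)) : ℝ :=
  limUnder atTop (fun n : ℕ => (exNum k Fe n : ℝ) / (n.choose k : ℝ))

/-- The copies of `F` in `H`, as subhypergraphs: pairs of a vertex set and an edge set. -/
def copies {ι V : Type*} [Fintype ι] (Fe : Set (Finset ι)) (H : Set (Finset V)) :
    Set (Finset V × Set (Finset V)) :=
  {p | ∃ f : ι ↪ V, p.1 = Finset.univ.map f ∧ p.2 = (fun s => s.map f) '' Fe ∧
    ∀ s ∈ Fe, s.map f ∈ H}

/-- The step of the process at which the edge `e` is added (`0` if `e ∈ H0`). -/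
noncomputable def stepOf {ι V : Type*} (k : ℕ) (Fe : Set (Finset ι)) (H0 : Set (Finset V))
    (e : Finset V) : ℕ :=
  sInf {s | e ∈ procSeq k Fe H0 s}

/-- `i(D)`: the largest step index whose chosen edge belongs to the edge set `Ed`. -/
noncomputable def idxMax {V : Type*} (e : ℕ → Finset V) (τ : ℕ) (Ed : Set (Finset V)) : ℕ :=
  sSup {i | i ∈ Set.Icc 1 τ ∧ e i ∈ Ed}

/-- `j(D)`: the largest step index whose chosen edge belongs to `Ed` minus `e_{i(D)}`. -/
noncomputable def idxSnd {V : Type*} (e : ℕ → Finset V) (τ : ℕ) (Ed : Set (Finset V)) : ℕ :=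
  sSup {j | j ∈ Set.Icc 1 τ ∧ e j ∈ Ed \ {e (idxMax e τ Ed)}}

/-- The type (1–4) of a copy `D` with completing edge `eD`, as in the paper. -/
def copyType {ι V : Type*} (k : ℕ) (Fe : Set (Finset ι)) (H0 : Set (Finset V))
    (e : ℕ → Finset V) (τ : ℕ) (eD : Finset V) (Ed : Set (Finset V)) (α : ℕ) : Prop :=
  (α = 1 ∧ stepOf k Fe H0 eD ≤ idxSnd e τ Ed) ∨
  (α = 2 ∧ idxSnd e τ Ed < stepOf k Fe H0 eD ∧ stepOf k Fe H0 eD < idxMax e τ Ed) ∨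
  (α = 3 ∧ idxMax e τ Ed < stepOf k Fe H0 eD) ∨
  (α = 4 ∧ stepOf k Fe H0 eD = idxMax e τ Ed)

/-! Every `m`-set of vertices spans at most `ex(m, F)` edges of `H` unless it contains a copy
of `F`. Double counting the pairs (edge, `m`-set containing it) shows that `ex(n, F) / C(n, k)`
is antitone in `n`, so `π(F)` is a genuine limit; and once `m` is so large that
`ex(m, F) ≤ (π(F) + ε/2) C(m, k)`, it shows that an `ε/2`-fraction of the `m`-sets contain a copy.
A single copy lies in only `C(n - v, m - v)` of them, which leaves `Ω(C(n, v)) = Ω(n ^ v)` copies. -/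

open Topology

section Supersaturation

variable {ι V : Type*}

theorem sum_card_filter_subset_powersetCard [Fintype V] [DecidableEq V]
    {H : Finset (Finset V)} {k m : ℕ} (hH : (H : Set (Finset V)).Sized k) (hkm : k ≤ m) :
    ∑ W ∈ powersetCard m univ, #{e ∈ H | e ⊆ W} =
      #H * (Fintype.card V - k).choose (m - k) := by
  have hdouble := sum_card_bipartiteAbove_eq_sum_card_bipartiteBelow (s := H)
    (t := powersetCard m (Finset.univ : Finset V)) (· ⊆ ·)
  simp only [bipartiteBelow] at hdouble
  rw [← hdouble, ← smul_eq_mul, ← sum_const]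
  refine sum_congr rfl fun e he => ?_
  rw [bipartiteAbove, card_filter_powersetCard_subset _ _ _ (Finset.subset_univ e) (hH he ▸ hkm),
    card_univ, hH he]

theorem Set.Sized.ncard_le_choose [Fintype V] {H : Set (Finset V)} {k : ℕ} (hH : H.Sized k) :
    H.ncard ≤ (Fintype.card V).choose k := by
  classical
  calc H.ncard ≤ (Finset.powersetCard k (Finset.univ : Finset V) : Set (Finset V)).ncard :=
        Set.ncard_le_ncard (fun e he => mem_powersetCard.2 ⟨Finset.subset_univ e, hH he⟩)
    _ = (Fintype.card V).choose k := by rw [Set.ncard_coe_finset, card_powersetCard, card_univ]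

section Extremal

variable {k : ℕ} (Fe : Set (Finset ι))

theorem ncard_le_exNum {m : ℕ} {H : Set (Finset (Fin m))} (hH : H.Sized k)
    (hF : ¬ ContainsCopy Fe H) : H.ncard ≤ exNum k Fe m :=
  le_csSup
    ⟨m.choose k, fun _ ⟨H', hH', _, h⟩ => h ▸ by simpa using Set.Sized.ncard_le_choose hH'⟩
    ⟨H, hH, hF, rfl⟩

theorem exNum_le_of_forall {m b : ℕ}
    (h : ∀ H : Set (Finset (Fin m)), H.Sized k → ¬ ContainsCopy Fe H → H.ncard ≤ b) :
    exNum k Fe m ≤ b :=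
  csSup_le' fun _ ⟨H, hH, hF, h'⟩ => h' ▸ h H hH hF

theorem card_filter_subset_le_exNum [Fintype ι] [DecidableEq V] {H : Finset (Finset V)}
    (hH : (H : Set (Finset V)).Sized k) {W : Finset V}
    (hW : ¬ ∃ p ∈ copies Fe (H : Set (Finset V)), p.1 ⊆ W) :
    #{e ∈ H | e ⊆ W} ≤ exNum k Fe #W := by
  obtain ⟨g, hg⟩ : ∃ g : Fin #W ↪ V, Finset.univ.map g = W :=
    ⟨W.equivFin.symm.toEmbedding.trans (Function.Embedding.subtype _), by
      ext x; simp only [Finset.mem_map]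
      exact ⟨fun ⟨a, _, h⟩ => h ▸ (W.equivFin.symm a).2,
        fun h => ⟨W.equivFin ⟨x, h⟩, Finset.mem_univ _, by simp⟩⟩⟩
  have hmapW (s : Finset (Fin #W)) : s.map g ⊆ W :=
    (map_subset_map.2 (Finset.subset_univ s)).trans hg.subset
  have hcard : (Finset.map g ⁻¹' (H : Set (Finset V))).ncard = #{e ∈ H | e ⊆ W} := by
    have hpre :
        Finset.map g ⁻¹' (H : Set (Finset V)) = Finset.map g ⁻¹' ↑{e ∈ H | e ⊆ W} := by
      ext s; simp [hmapW s]
    rw [hpre, Set.ncard_preimage_of_injective_subset_range (map_injective g), Set.ncard_coe_finset]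
    intro e he
    obtain ⟨u, -, rfl⟩ := subset_map_iff.1 (hg ▸ (mem_filter.1 he).2)
    exact ⟨u, rfl⟩
  rw [← hcard]
  refine ncard_le_exNum Fe (fun s hs => by simpa using hH hs) fun ⟨f, hf⟩ => hW ?_
  refine ⟨(Finset.univ.map (f.trans g), (fun s => s.map (f.trans g)) '' Fe),
    ⟨f.trans g, rfl, rfl, fun s hs => ?_⟩, ?_⟩
  · rw [← Finset.map_map]; exact hf s hs
  · rw [← Finset.map_map]; exact hmapW _

end Extremal

section Hosts

variable [Fintype ι] [Fintype V] {k : ℕ} (Fe : Set (Finset ι))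

open Classical in
noncomputable def copyHosts (H : Set (Finset V)) (m : ℕ) : Finset (Finset V) :=
  {W ∈ powersetCard m Finset.univ | ∃ p ∈ copies Fe H, p.1 ⊆ W}

theorem mem_copyHosts {H : Set (Finset V)} {m : ℕ} {W : Finset V} :
    W ∈ copyHosts Fe H m ↔ #W = m ∧ ∃ p ∈ copies Fe H, p.1 ⊆ W := by
  simp [copyHosts]

theorem copyHosts_eq_empty {H : Set (Finset V)} (hF : ¬ ContainsCopy Fe H) (m : ℕ) :
    copyHosts Fe H m = ∅ :=
  eq_empty_of_forall_notMem fun _ hW =>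
    let ⟨_, ⟨f, _, _, hf⟩, _⟩ := ((mem_copyHosts Fe).1 hW).2
    hF ⟨f, hf⟩

theorem card_mul_choose_le_exNum_add [DecidableEq V] {H : Finset (Finset V)}
    (hH : (H : Set (Finset V)).Sized k) {m : ℕ} (hkm : k ≤ m) :
    #H * (Fintype.card V - k).choose (m - k) ≤
      (Fintype.card V).choose m * exNum k Fe m + #(copyHosts Fe (H : Set (Finset V)) m) *
        m.choose k := by
  rw [← sum_card_filter_subset_powersetCard hH hkm]
  calc ∑ W ∈ powersetCard m Finset.univ, #{e ∈ H | e ⊆ W}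
      ≤ ∑ W ∈ powersetCard m Finset.univ,
          (exNum k Fe m + if W ∈ copyHosts Fe (H : Set (Finset V)) m then m.choose k else 0) :=
        sum_le_sum fun W hW => ?_
    _ = (Fintype.card V).choose m * exNum k Fe m +
          #(copyHosts Fe (H : Set (Finset V)) m) * m.choose k := by
      have hsub : copyHosts Fe (H : Set (Finset V)) m ⊆ powersetCard m Finset.univ :=
        fun W hW => mem_powersetCard.2 ⟨Finset.subset_univ W, ((mem_copyHosts Fe).1 hW).1⟩
      rw [sum_add_distrib, sum_const, card_powersetCard, card_univ, smul_eq_mul, sum_ite_mem,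
        Finset.inter_eq_right.2 hsub, sum_const, smul_eq_mul]
  have hWm : #W = m := (mem_powersetCard.1 hW).2
  by_cases hG : W ∈ copyHosts Fe (H : Set (Finset V)) m
  · rw [if_pos hG, ← hWm, ← card_powersetCard]
    refine le_add_left (card_le_card fun e he => ?_)
    rw [mem_filter] at he
    exact mem_powersetCard.2 ⟨he.2, hH he.1⟩
  · rw [if_neg hG, add_zero, ← hWm]
    exact card_filter_subset_le_exNum Fe hH fun h => hG ((mem_copyHosts Fe).2 ⟨hWm, h⟩)

theorem card_copyHosts_le (H : Set (Finset V)) {m : ℕ} (hm : Fintype.card ι ≤ m) :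
    #(copyHosts Fe H m) ≤
      (copies Fe H).ncard * (Fintype.card V - Fintype.card ι).choose (m - Fintype.card ι) := by
  classical
  set C := (copies Fe H).toFinite.toFinset
  calc #(copyHosts Fe H m)
      ≤ #(C.biUnion fun p => {W ∈ powersetCard m Finset.univ | p.1 ⊆ W}) := card_le_card ?_
    _ ≤ ∑ p ∈ C, #{W ∈ powersetCard m Finset.univ | p.1 ⊆ W} := card_biUnion_le
    _ = ∑ p ∈ C, (Fintype.card V - Fintype.card ι).choose (m - Fintype.card ι) :=
      sum_congr rfl fun p hp => ?_
    _ = (copies Fe H).ncard * (Fintype.card V - Fintype.card ι).choose (m - Fintype.card ι) := by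
      rw [sum_const, smul_eq_mul, Set.ncard_eq_toFinset_card _ (copies Fe H).toFinite]
  · intro W hW
    obtain ⟨hWm, p, hp, hpW⟩ := (mem_copyHosts Fe).1 hW
    exact mem_biUnion.2 ⟨p, (Set.Finite.mem_toFinset _).2 hp,
      mem_filter.2 ⟨mem_powersetCard.2 ⟨Finset.subset_univ W, hWm⟩, hpW⟩⟩
  · obtain ⟨f, hp1, -⟩ := (Set.Finite.mem_toFinset _).1 hp
    have hcard : #p.1 = Fintype.card ι := by rw [hp1, card_map, card_univ]
    rw [card_filter_powersetCard_subset _ _ _ (Finset.subset_univ _) (hcard ▸ hm), card_univ,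
      hcard]

theorem mul_choose_le_ncard_copies {H : Set (Finset V)} (hH : H.Sized k) {m : ℕ}
    (hkm : k ≤ m) (hvm : Fintype.card ι ≤ m) (hmV : m ≤ Fintype.card V) {c η : ℝ}
    (hex : (exNum k Fe m : ℝ) ≤ c * m.choose k)
    (hdens : (c + η) * (Fintype.card V).choose k ≤ H.ncard) :
    η * (Fintype.card V).choose (Fintype.card ι) ≤
      (copies Fe H).ncard * m.choose (Fintype.card ι) := by
  classical
  obtain ⟨H, rfl⟩ := H.toFinite.exists_finset_coe
  set N := Fintype.card V
  set v := Fintype.card ι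
  have hcount : (#H * (N - k).choose (m - k) : ℝ) ≤ N.choose m * exNum k Fe m +
      (copies Fe (H : Set (Finset V))).ncard * (N - v).choose (m - v) * m.choose k := by
    exact_mod_cast (card_mul_choose_le_exNum_add Fe hH hkm).trans
      (Nat.add_le_add_left (Nat.mul_le_mul_right _ (card_copyHosts_le Fe _ hvm)) _)
  have hk : (N.choose m * m.choose k : ℝ) = N.choose k * (N - k).choose (m - k) := by
    exact_mod_cast Nat.choose_mul hkm
  have hv : (N.choose m * m.choose v : ℝ) = N.choose v * (N - v).choose (m - v) := by
    exact_mod_cast Nat.choose_mul hvm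
  rw [Set.ncard_coe_finset] at hdens
  have hhosts :
      η * N.choose m ≤ (copies Fe (H : Set (Finset V))).ncard * (N - v).choose (m - v) := by
    refine le_of_mul_le_mul_right ?_ (by exact_mod_cast Nat.choose_pos hkm : (0 : ℝ) < m.choose k)
    linarith [mul_le_mul_of_nonneg_right hdens (Nat.cast_nonneg ((N - k).choose (m - k))),
      mul_le_mul_of_nonneg_left hex (Nat.cast_nonneg (N.choose m)), congrArg (c * ·) hk,
      congrArg (η * ·) hk]
  refine le_of_mul_le_mul_right ?_
    (by exact_mod_cast Nat.choose_pos (by omega) : (0 : ℝ) < (N - v).choose (m - v))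
  linarith [mul_le_mul_of_nonneg_right hhosts (Nat.cast_nonneg (m.choose v)), congrArg (η * ·) hv]

end Hosts

section Density

variable [Fintype ι] (k : ℕ) (Fe : Set (Finset ι))

theorem exNum_mul_choose_le {m n : ℕ} (hkm : k ≤ m) (hmn : m ≤ n) :
    exNum k Fe n * (n - k).choose (m - k) ≤ n.choose m * exNum k Fe m := by
  have hpos : 0 < (n - k).choose (m - k) := Nat.choose_pos (by omega)
  rw [← Nat.le_div_iff_mul_le hpos]
  refine exNum_le_of_forall Fe fun H hH hF => (Nat.le_div_iff_mul_le hpos).2 ?_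
  obtain ⟨H, rfl⟩ := H.toFinite.exists_finset_coe
  simpa [copyHosts_eq_empty Fe hF] using card_mul_choose_le_exNum_add Fe hH hkm

theorem exNum_div_choose_antitone {m n : ℕ} (hkm : k ≤ m) (hmn : m ≤ n) :
    (exNum k Fe n : ℝ) / n.choose k ≤ exNum k Fe m / m.choose k := by
  have hchoose : n.choose m * m.choose k = n.choose k * (n - k).choose (m - k) :=
    Nat.choose_mul hkm
  have key : exNum k Fe n * m.choose k * n.choose m ≤ exNum k Fe m * n.choose k * n.choose m :=
    calc exNum k Fe n * m.choose k * n.choose m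
        = exNum k Fe n * (n - k).choose (m - k) * n.choose k := by
          rw [mul_assoc, mul_comm (m.choose k), hchoose]; ring
      _ ≤ n.choose m * exNum k Fe m * n.choose k :=
        Nat.mul_le_mul_right _ (exNum_mul_choose_le k Fe hkm hmn)
      _ = exNum k Fe m * n.choose k * n.choose m := by ring
  rw [div_le_div_iff₀ (by exact_mod_cast Nat.choose_pos (hkm.trans hmn))
    (by exact_mod_cast Nat.choose_pos hkm)]
  exact_mod_cast Nat.le_of_mul_le_mul_right key (Nat.choose_pos hmn)

theorem tendsto_exNum_div_choose :
    Tendsto (fun n => (exNum k Fe n : ℝ) / n.choose k) atTop (𝓝 (turanDensity k Fe)) := by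
  set a : ℕ → ℝ := fun n => (exNum k Fe n : ℝ) / n.choose k
  have hanti : Antitone fun i => a (i + k) :=
    fun i j hij => exNum_div_choose_antitone k Fe (Nat.le_add_left k i) (by omega)
  have hlim := (tendsto_add_atTop_iff_nat k).1
    (tendsto_atTop_ciInf hanti ⟨0, by rintro _ ⟨i, rfl⟩; positivity⟩)
  rwa [turanDensity, hlim.limUnder_eq]

end Density

theorem Nat.pow_le_two_pow_mul_factorial_mul_choose {n v : ℕ} (h : 2 * v ≤ n) :
    n ^ v ≤ 2 ^ v * (v.factorial * n.choose v) :=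
  calc n ^ v ≤ (2 * (n + 1 - v)) ^ v := Nat.pow_le_pow_left (by omega) v
    _ = 2 ^ v * (n + 1 - v) ^ v := mul_pow ..
    _ ≤ 2 ^ v * n.descFactorial v := Nat.mul_le_mul_left _ (Nat.pow_sub_le_descFactorial n v)
    _ = 2 ^ v * (v.factorial * n.choose v) := by rw [Nat.descFactorial_eq_factorial_mul_choose]

end Supersaturation

theorem supersaturation_general (k : ℕ) {ι : Type*} [Fintype ι] (Fe : Set (Finset ι))
    (ε : ℝ) (hε : 0 < ε) :
    ∃ δ : ℝ, 0 < δ ∧ ∃ n₀ : ℕ, ∀ n : ℕ, n₀ ≤ n →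
      ∀ H : Set (Finset (Fin n)), (∀ e ∈ H, e.card = k) →
        (turanDensity k Fe + ε) * (n.choose k : ℝ) ≤ (H.ncard : ℝ) →
          δ * (n : ℝ) ^ (Fintype.card ι) ≤ ((copies Fe H).ncard : ℝ) := by
  set v := Fintype.card ι
  obtain ⟨N, hN⟩ := eventually_atTop.1 ((tendsto_exNum_div_choose k Fe).eventually_lt_const
    (by linarith : turanDensity k Fe < turanDensity k Fe + ε / 2))
  set m := N + k + v
  have hex : (exNum k Fe m : ℝ) ≤ (turanDensity k Fe + ε / 2) * m.choose k :=
    ((div_lt_iff₀ (by exact_mod_cast Nat.choose_pos (by omega))).1 (hN m (by omega))).le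
  have hmv : (0 : ℝ) < m.choose v := by exact_mod_cast Nat.choose_pos (by omega)
  refine ⟨ε / 2 / (2 ^ v * v.factorial * m.choose v), by positivity, m + 2 * v,
    fun n hn H hH hdens => ?_⟩
  have hcopies := mul_choose_le_ncard_copies Fe hH (m := m) (by omega) (by omega)
    (by simp only [Fintype.card_fin]; omega) hex (η := ε / 2)
    (by rw [Fintype.card_fin]; linarith)
  have hpow : (n : ℝ) ^ v ≤ 2 ^ v * (v.factorial * n.choose v) := by
    exact_mod_cast Nat.pow_le_two_pow_mul_factorial_mul_choose (by omega)
  rw [Fintype.card_fin] at hcopies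
  calc ε / 2 / (2 ^ v * v.factorial * m.choose v) * n ^ v
      ≤ ε / 2 / (2 ^ v * v.factorial * m.choose v) * (2 ^ v * (v.factorial * n.choose v)) := by
        gcongr
    _ = ε / 2 * n.choose v / m.choose v := by field_simp
    _ ≤ (copies Fe H).ncard := (div_le_iff₀ hmv).2 hcopies

/-- Supersaturation: for every `k`-graph `F` and every `ε > 0` there are `δ > 0` and `n₀`
such that every `k`-graph on `n ≥ n₀` vertices with at least `(π(F) + ε) · C(n,k)` edges
contains at least `δ · n ^ v(F)` copies of `F`. -/
theorem supersaturation (k : ℕ) {ι : Type*} [Fintype ι] (Fe : Set (Finset ι))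
    (hFe : ∀ s ∈ Fe, s.card = k) (ε : ℝ) (hε : 0 < ε) :
    ∃ δ : ℝ, 0 < δ ∧ ∃ n₀ : ℕ, ∀ n : ℕ, n₀ ≤ n →
      ∀ H : Set (Finset (Fin n)), (∀ e ∈ H, e.card = k) →
        (turanDensity k Fe + ε) * (n.choose k : ℝ) ≤ (H.ncard : ℝ) →
          δ * (n : ℝ) ^ (Fintype.card ι) ≤ ((copies Fe H).ncard : ℝ) :=
  supersaturation_general k Fe ε hε
end

section
/- Let F be a k-graph, e ∈ E(F), F⁻ = F − e, and let G be the k-graph of chosen new edges {e_i : i ∈ [τ]} of an F-process on n vertices with running time τ, where F has at least three edges. Suppose for every copy D of F⁻ in G a k-set e_D is fixed such that D ∪ e_D is a copy of F. For each copy D, let i(D) = max{i : e_i ∈ E(D)} and j(D) = max{j : e_j ∈ E(D)\{e_{i(D)}}}, and let 𝔰(e_D) denote the step at which e_D is added to the process (0 if e_D ∈ E(H₀)). If j(D) < 𝔰(e_D) < i(D), then 𝔰(e_D) = i(D) − 1. -/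
open Finset Set Filter

/-! At time `𝔰(e_D)` the copy `D ∪ e_D` of `F` has all its edges except possibly `e_{i(D)}`:
`e_D` is present by definition of `𝔰`, and every other edge of `D` was chosen at a step
`≤ j(D) < 𝔰(e_D)`. Hence `e_{i(D)}` is added by step `𝔰(e_D) + 1`, while it is new at step
`i(D)`; so `i(D) ≤ 𝔰(e_D) + 1`, which together with `𝔰(e_D) < i(D)` is the claim. -/

section Percolation

variable {ι V : Type*} {k : ℕ} {Fe : Set (Finset ι)} {H0 : Set (Finset V)}

theorem monotone_procSeq : Monotone (procSeq k Fe H0) :=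
  monotone_nat_of_le_succ fun _ => Set.subset_union_left

theorem mem_procSeq_stepOf {x : Finset V} (h : stepOf k Fe H0 x ≠ 0) :
    x ∈ procSeq k Fe H0 (stepOf k Fe H0 x) := by
  rcases Set.eq_empty_or_nonempty {t | x ∈ procSeq k Fe H0 t} with hempty | hne
  · exact absurd (by rw [stepOf, hempty, Nat.sInf_empty]) h
  · exact Nat.sInf_mem hne

theorem mem_procSeq_succ_of_forall_ne {t : ℕ} {g : ι ↪ V} {x : Finset V} (hx : x.card = k)
    (hxg : x ∈ (fun s => s.map g) '' Fe)
    (hrest : ∀ s ∈ Fe, s.map g ≠ x → s.map g ∈ procSeq k Fe H0 t) :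
    x ∈ procSeq k Fe H0 (t + 1) := by
  obtain ⟨s, hs, hsx⟩ := hxg
  refine Or.inr ⟨hx, g, fun r hr => ?_, s, hs, hsx⟩
  by_cases hrx : r.map g = x
  · exact Or.inr hrx
  · exact Or.inl (hrest r hr hrx)

end Percolation

section Indices

variable {V : Type*} {e : ℕ → Finset V} {τ : ℕ} {Ed : Set (Finset V)}

theorem idxMax_mem (h : idxMax e τ Ed ≠ 0) :
    idxMax e τ Ed ∈ Set.Icc 1 τ ∧ e (idxMax e τ Ed) ∈ Ed := by
  rcases Set.eq_empty_or_nonempty {i | i ∈ Set.Icc 1 τ ∧ e i ∈ Ed} with hempty | hne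
  · exact absurd (by rw [idxMax, hempty, csSup_empty, Nat.bot_eq_zero]) h
  · exact Nat.sSup_mem hne ⟨τ, fun _ hm => hm.1.2⟩

theorem le_idxSnd {m : ℕ} (hm : m ∈ Set.Icc 1 τ) (hmEd : e m ∈ Ed)
    (hne : e m ≠ e (idxMax e τ Ed)) : m ≤ idxSnd e τ Ed :=
  le_csSup ⟨τ, fun _ hj => hj.1.2⟩ ⟨hm, hmEd, hne⟩

theorem mem_at_idxSnd_of_ne_idxMax {P : ℕ → Set (Finset V)} (hP : Monotone P)
    (he : ∀ i ∈ Set.Icc 1 τ, e i ∈ P i) (hEd : Ed ⊆ e '' Set.Icc 1 τ) {x : Finset V}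
    (hx : x ∈ Ed) (hne : x ≠ e (idxMax e τ Ed)) : x ∈ P (idxSnd e τ Ed) := by
  obtain ⟨m, hm, rfl⟩ := hEd hx
  exact hP (le_idxSnd hm hx hne) (he m hm)

end Indices

theorem stepOf_eq_idxMax_sub_one_general (k : ℕ) {ι : Type*} (Fe : Set (Finset ι))
    (hFe : ∀ s ∈ Fe, s.card = k) (e₀ : Finset ι)
    {n : ℕ} (H0 : Set (Finset (Fin n)))
    (e : ℕ → Finset (Fin n)) (τ : ℕ)
    (he : ∀ i : ℕ, 1 ≤ i → i ≤ τ →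
      e i ∈ procSeq k Fe H0 i \ procSeq k Fe H0 (i - 1))
    (f : ι ↪ Fin n) (hf : ∀ s ∈ Fe \ {e₀}, s.map f ∈ e '' Set.Icc 1 τ)
    (eD : Finset (Fin n))
    (heD : ∃ g : ι ↪ Fin n,
      (fun s => s.map g) '' Fe = ((fun s => s.map f) '' (Fe \ {e₀})) ∪ {eD})
    (h1 : idxSnd e τ ((fun s => s.map f) '' (Fe \ {e₀})) < stepOf k Fe H0 eD)
    (h2 : stepOf k Fe H0 eD < idxMax e τ ((fun s => s.map f) '' (Fe \ {e₀}))) :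
    stepOf k Fe H0 eD = idxMax e τ ((fun s => s.map f) '' (Fe \ {e₀})) - 1 := by
  set Ed := (fun s => s.map f) '' (Fe \ {e₀})
  obtain ⟨g, hg⟩ := heD
  obtain ⟨⟨hi1, hiτ⟩, hiEd⟩ := idxMax_mem (e := e) (τ := τ) (Ed := Ed) (by omega)
  have heD_mem : eD ∈ procSeq k Fe H0 (stepOf k Fe H0 eD) := mem_procSeq_stepOf (by omega)
  have hcard : (e (idxMax e τ Ed)).card = k := by
    obtain ⟨s, hs, hse⟩ := hiEd
    rw [← hse, Finset.card_map]
    exact hFe s hs.1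
  have hnew : e (idxMax e τ Ed) ∈ procSeq k Fe H0 (stepOf k Fe H0 eD + 1) := by
    refine mem_procSeq_succ_of_forall_ne hcard (hg ▸ Set.mem_union_left _ hiEd)
      fun s hs hne => ?_
    rcases (hg ▸ Set.mem_image_of_mem _ hs : s.map g ∈ Ed ∪ {eD}) with hsEd | hsD
    · exact monotone_procSeq h1.le <| mem_at_idxSnd_of_ne_idxMax monotone_procSeq
        (fun i hi => (he i hi.1 hi.2).1) (Set.image_subset_iff.2 hf) hsEd hne
    · exact (Set.mem_singleton_iff.1 hsD) ▸ heD_mem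
  have hlate : idxMax e τ Ed - 1 ≤ stepOf k Fe H0 eD := by
    by_contra! hlt
    exact (he _ hi1 hiτ).2 (monotone_procSeq (by omega) hnew)
  omega

/-- Type 2 copies: if for a copy `D` of `F⁻ = F − e₀` in `G` (given by an embedding `f`)
the completing `k`-set `e_D` satisfies `j(D) < 𝔰(e_D) < i(D)`, then `𝔰(e_D) = i(D) − 1`. -/
theorem stepOf_eq_idxMax_sub_one (k : ℕ) {ι : Type*} [Fintype ι] (Fe : Set (Finset ι))
    (hFe : ∀ s ∈ Fe, s.card = k) (hcard : 3 ≤ Fe.ncard) (e₀ : Finset ι) (he₀ : e₀ ∈ Fe)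
    {n : ℕ} (H0 : Set (Finset (Fin n))) (hH0 : ∀ s ∈ H0, s.card = k)
    (e : ℕ → Finset (Fin n)) (τ : ℕ) (hτ : τ = runTime k Fe H0)
    (he : ∀ i : ℕ, 1 ≤ i → i ≤ τ →
      e i ∈ procSeq k Fe H0 i \ procSeq k Fe H0 (i - 1))
    (f : ι ↪ Fin n) (hf : ∀ s ∈ Fe \ {e₀}, s.map f ∈ e '' Set.Icc 1 τ)
    (eD : Finset (Fin n))
    (heD : ∃ g : ι ↪ Fin n,
      (fun s => s.map g) '' Fe = ((fun s => s.map f) '' (Fe \ {e₀})) ∪ {eD})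
    (h1 : idxSnd e τ ((fun s => s.map f) '' (Fe \ {e₀})) < stepOf k Fe H0 eD)
    (h2 : stepOf k Fe H0 eD < idxMax e τ ((fun s => s.map f) '' (Fe \ {e₀}))) :
    stepOf k Fe H0 eD = idxMax e τ ((fun s => s.map f) '' (Fe \ {e₀})) - 1 :=
  stepOf_eq_idxMax_sub_one_general k Fe hFe e₀ H0 e τ he f hf eD heD h1 h2
end
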